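/- Let k ∈ L²(ℝ³×ℝ³; ℂ). Then the series p := Σ_{n≥1} (1/(2n)!) (k∘k̄)ⁿ and r := Σ_{n≥1} (1/(2n+1)!) (k∘k̄)ⁿ∘k converge absolutely in L²(ℝ³×ℝ³), and their sums satisfy ‖p‖₂ ≤ cosh(‖k‖₂) − 1 and ‖r‖₂ ≤ sinh(‖k‖₂) − ‖k‖₂. -/

import Mathlib

open MeasureTheory Real
open scoped ENNReal

noncomputable section

abbrev E3 : Type := EuclideanSpace ℝ (Fin 3)

/-- Composition of integral kernels: `(k₁∘k₂)(x,y) = ∫ k₁(x,z) k₂(z,y) dz`. -/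
def kComp (k₁ k₂ : E3 × E3 → ℂ) : E3 × E3 → ℂ :=
  fun p => ∫ z : E3, k₁ (p.1, z) * k₂ (z, p.2)

/-- Pointwise complex conjugate of a kernel. -/
def kConj (k : E3 × E3 → ℂ) : E3 × E3 → ℂ := fun p => starRingEnd ℂ (k p)

/-- `kChain k n = (k∘k̄)ⁿ∘k`. -/
def kChain (k : E3 × E3 → ℂ) : ℕ → E3 × E3 → ℂ
  | 0 => k
  | n + 1 => kComp k (kComp (kConj k) (kChain k n))

/-- `kPow k n = (k∘k̄)^{n+1}`. -/
def kPow (k : E3 × E3 → ℂ) : ℕ → E3 × E3 → ℂ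
  | 0 => kComp k (kConj k)
  | n + 1 => kComp (kComp k (kConj k)) (kPow k n)

/-- The `L²(ℝ³×ℝ³)` norm of a kernel. -/
def l2n (h : E3 × E3 → ℂ) : ℝ := Real.sqrt (∫ p : E3 × E3, ‖h p‖ ^ 2)

/-!
Cauchy–Schwarz in the integration variable gives the Hilbert–Schmidt bound
`‖k₁ ∘ k₂‖₂ ≤ ‖k₁‖₂ ‖k₂‖₂`; since composition only sees kernels up to a.e. equality, it
holds for merely a.e. strongly measurable kernels. Iterating it,
`‖(k ∘ k̄)ⁿ‖₂ ≤ ‖k‖₂^(2n)` and `‖(k ∘ k̄)ⁿ ∘ k‖₂ ≤ ‖k‖₂^(2n+1)`, so the two series are dominated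
termwise by the tails of the power series of `cosh ‖k‖₂` and `sinh ‖k‖₂`. Minkowski's inequality
for series (partial sums converge a.e., then Fatou) bounds the `L²` norm of each sum by the sum
of these majorants.
-/

namespace MeasureTheory

section Series

open Filter Topology

variable {α E : Type*} [MeasurableSpace α] {μ : Measure α} [NormedAddCommGroup E]
  [CompleteSpace E] {p : ℝ≥0∞} {f : ℕ → α → E}

theorem ae_tendsto_sum_range_of_tsum_eLpNorm_ne_top (hp : 1 ≤ p)
    (hf : ∀ n, AEStronglyMeasurable (f n) μ) (h : ∑' n, eLpNorm (f n) p μ ≠ ∞) :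
    ∀ᵐ x ∂μ, Tendsto (fun N => ∑ n ∈ Finset.range N, f n x) atTop (𝓝 (∑' n, f n x)) :=
  (summable_norm_of_tsum_eLpNorm_ne_top hp hf h).mono fun _ hx =>
    hx.of_norm.hasSum.tendsto_sum_nat

theorem aestronglyMeasurable_tsum_of_tsum_eLpNorm_ne_top (hp : 1 ≤ p)
    (hf : ∀ n, AEStronglyMeasurable (f n) μ) (h : ∑' n, eLpNorm (f n) p μ ≠ ∞) :
    AEStronglyMeasurable (fun x => ∑' n, f n x) μ :=
  aestronglyMeasurable_of_tendsto_ae atTop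
    (fun _ => Finset.aestronglyMeasurable_fun_sum _ fun n _ => hf n)
    (ae_tendsto_sum_range_of_tsum_eLpNorm_ne_top hp hf h)

theorem eLpNorm_tsum_le (hp : 1 ≤ p) (hf : ∀ n, AEStronglyMeasurable (f n) μ) :
    eLpNorm (fun x => ∑' n, f n x) p μ ≤ ∑' n, eLpNorm (f n) p μ := by
  rcases eq_or_ne (∑' n, eLpNorm (f n) p μ) ∞ with h | h
  · exact h ▸ le_top
  have partial_sum_le (N : ℕ) :
      eLpNorm (fun x => ∑ n ∈ Finset.range N, f n x) p μ ≤ ∑' n, eLpNorm (f n) p μ :=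
    (Finset.sum_fn (Finset.range N) f ▸ eLpNorm_sum_le (fun n _ => hf n) hp).trans
      (ENNReal.sum_le_tsum _)
  exact Lp.eLpNorm_le_of_ae_tendsto (.of_forall partial_sum_le)
    (fun _ => Finset.aestronglyMeasurable_fun_sum _ fun n _ => hf n)
    (ae_tendsto_sum_range_of_tsum_eLpNorm_ne_top hp hf h)

theorem lpNorm_tsum_le {b : ℕ → ℝ} {C : ℝ} (hp : 1 ≤ p)
    (hf : ∀ n, AEStronglyMeasurable (f n) μ) (hb : ∀ n, 0 ≤ b n)
    (hfb : ∀ n, eLpNorm (f n) p μ ≤ ENNReal.ofReal (b n)) (hbC : HasSum b C) :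
    lpNorm (fun x => ∑' n, f n x) p μ ≤ C := by
  by_cases hmeas : AEStronglyMeasurable (fun x => ∑' n, f n x) μ
  · rw [← toReal_eLpNorm hmeas]
    refine ENNReal.toReal_le_of_le_ofReal (hbC.nonneg hb) ((eLpNorm_tsum_le hp hf).trans ?_)
    rw [← hbC.tsum_eq, ENNReal.ofReal_tsum_of_nonneg hb hbC.summable]
    exact ENNReal.tsum_le_tsum hfb
  · rw [lpNorm_of_not_aestronglyMeasurable hmeas]
    exact hbC.nonneg hb

end Series

section HilbertSchmidt

variable {α β γ E : Type*} [MeasurableSpace α] [MeasurableSpace β] [MeasurableSpace γ]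
  {μ : Measure α} {ν : Measure β} {ρ : Measure γ}

theorem eLpNorm_two_rpow_two [NormedAddCommGroup E] (f : α → E) :
    eLpNorm f 2 μ ^ (2 : ℝ) = ∫⁻ x, ‖f x‖ₑ ^ (2 : ℝ) ∂μ := by
  simpa using eLpNorm_nnreal_pow_eq_lintegral (f := f) (μ := μ) (p := 2) two_ne_zero

theorem enorm_integral_mul_rpow_two_le {f g : β → ℂ} (hf : AEMeasurable f ν)
    (hg : AEMeasurable g ν) :
    ‖∫ z, f z * g z ∂ν‖ₑ ^ (2 : ℝ) ≤ (∫⁻ z, ‖f z‖ₑ ^ (2 : ℝ) ∂ν) * ∫⁻ z, ‖g z‖ₑ ^ (2 : ℝ) ∂ν := by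
  have cauchy_schwarz : ‖∫ z, f z * g z ∂ν‖ₑ ≤
      (∫⁻ z, ‖f z‖ₑ ^ (2 : ℝ) ∂ν) ^ (1 / 2 : ℝ) * (∫⁻ z, ‖g z‖ₑ ^ (2 : ℝ) ∂ν) ^ (1 / 2 : ℝ) :=
    calc ‖∫ z, f z * g z ∂ν‖ₑ ≤ ∫⁻ z, ‖f z‖ₑ * ‖g z‖ₑ ∂ν := by
          simpa only [enorm_mul] using enorm_integral_le_lintegral_enorm (fun z => f z * g z)
      _ ≤ _ := ENNReal.lintegral_mul_le_Lp_mul_Lq ν Real.HolderConjugate.two_two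
          hf.enorm hg.enorm
  calc ‖∫ z, f z * g z ∂ν‖ₑ ^ (2 : ℝ)
      ≤ ((∫⁻ z, ‖f z‖ₑ ^ (2 : ℝ) ∂ν) ^ (1 / 2 : ℝ) *
          (∫⁻ z, ‖g z‖ₑ ^ (2 : ℝ) ∂ν) ^ (1 / 2 : ℝ)) ^ (2 : ℝ) :=
        ENNReal.rpow_le_rpow cauchy_schwarz zero_le_two
    _ = _ := by
        rw [ENNReal.mul_rpow_of_nonneg _ _ zero_le_two, ← ENNReal.rpow_mul, ← ENNReal.rpow_mul]
        norm_num

variable [SFinite ν] [SFinite ρ]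

theorem eLpNorm_two_integral_mul_le {f : α × β → ℂ} {g : β × γ → ℂ} (hf : Measurable f)
    (hg : Measurable g) :
    eLpNorm (fun p : α × γ => ∫ z, f (p.1, z) * g (z, p.2) ∂ν) 2 (μ.prod ρ) ≤
      eLpNorm f 2 (μ.prod ν) * eLpNorm g 2 (ν.prod ρ) := by
  set F : α → ℝ≥0∞ := fun x => ∫⁻ z, ‖f (x, z)‖ₑ ^ (2 : ℝ) ∂ν
  set G : γ → ℝ≥0∞ := fun y => ∫⁻ z, ‖g (z, y)‖ₑ ^ (2 : ℝ) ∂ν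
  have hF : Measurable F := (hf.enorm.pow_const _).lintegral_prod_right'
  have hG : Measurable G := ((hg.comp measurable_swap).enorm.pow_const _).lintegral_prod_right'
  have pointwise (p : α × γ) : ‖∫ z, f (p.1, z) * g (z, p.2) ∂ν‖ₑ ^ (2 : ℝ) ≤ F p.1 * G p.2 :=
    enorm_integral_mul_rpow_two_le (hf.comp measurable_prodMk_left).aemeasurable
      (hg.comp measurable_prodMk_right).aemeasurable
  rw [← ENNReal.rpow_le_rpow_iff two_pos, ENNReal.mul_rpow_of_nonneg _ _ zero_le_two,
    eLpNorm_two_rpow_two, eLpNorm_two_rpow_two, eLpNorm_two_rpow_two,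
    lintegral_prod _ (hf.enorm.pow_const _).aemeasurable,
    lintegral_prod_symm _ (hg.enorm.pow_const _).aemeasurable,
    ← lintegral_prod_mul hF.aemeasurable hG.aemeasurable]
  exact lintegral_mono pointwise

end HilbertSchmidt

end MeasureTheory

theorem kComp_congr_ae {k₁ k₁' k₂ k₂' : E3 × E3 → ℂ} (h₁ : k₁ =ᵐ[volume] k₁')
    (h₂ : k₂ =ᵐ[volume] k₂') : kComp k₁ k₂ =ᵐ[volume] kComp k₁' k₂' := by
  have h₁' : ∀ᵐ x, ∀ᵐ z, k₁ (x, z) = k₁' (x, z) := Measure.ae_ae_of_ae_prod h₁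
  have h₂' : ∀ᵐ y, ∀ᵐ z, k₂ (z, y) = k₂' (z, y) :=
    Measure.ae_ae_of_ae_prod (Measure.measurePreserving_swap.quasiMeasurePreserving.ae h₂)
  filter_upwards [Measure.quasiMeasurePreserving_fst.ae h₁',
    Measure.quasiMeasurePreserving_snd.ae h₂'] with p hx hy
  refine integral_congr_ae ?_
  filter_upwards [hx, hy] with z hxz hzy
  rw [hxz, hzy]

theorem measurable_kComp {k₁ k₂ : E3 × E3 → ℂ} (h₁ : Measurable k₁) (h₂ : Measurable k₂) :
    Measurable (kComp k₁ k₂) :=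
  ((h₁.comp (measurable_fst.fst.prodMk measurable_snd)).mul
    (h₂.comp (measurable_snd.prodMk measurable_fst.snd))).stronglyMeasurable
    |>.integral_prod_right'.measurable

theorem MeasureTheory.AEStronglyMeasurable.kComp {k₁ k₂ : E3 × E3 → ℂ}
    (h₁ : AEStronglyMeasurable k₁ volume) (h₂ : AEStronglyMeasurable k₂ volume) :
    AEStronglyMeasurable (kComp k₁ k₂) volume :=
  ⟨_, (measurable_kComp h₁.stronglyMeasurable_mk.measurable
    h₂.stronglyMeasurable_mk.measurable).stronglyMeasurable,
    kComp_congr_ae h₁.ae_eq_mk h₂.ae_eq_mk⟩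

theorem eLpNorm_kComp_le {k₁ k₂ : E3 × E3 → ℂ} (h₁ : AEStronglyMeasurable k₁ volume)
    (h₂ : AEStronglyMeasurable k₂ volume) :
    eLpNorm (kComp k₁ k₂) 2 volume ≤ eLpNorm k₁ 2 volume * eLpNorm k₂ 2 volume := by
  rw [eLpNorm_congr_ae (kComp_congr_ae h₁.ae_eq_mk h₂.ae_eq_mk), eLpNorm_congr_ae h₁.ae_eq_mk,
    eLpNorm_congr_ae h₂.ae_eq_mk]
  exact eLpNorm_two_integral_mul_le h₁.stronglyMeasurable_mk.measurable
    h₂.stronglyMeasurable_mk.measurable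

theorem MeasureTheory.AEStronglyMeasurable.kConj {k : E3 × E3 → ℂ}
    (h : AEStronglyMeasurable k volume) : AEStronglyMeasurable (kConj k) volume :=
  Complex.continuous_conj.comp_aestronglyMeasurable h

theorem eLpNorm_kConj (k : E3 × E3 → ℂ) : eLpNorm (kConj k) 2 volume = eLpNorm k 2 volume :=
  eLpNorm_star

theorem MeasureTheory.AEStronglyMeasurable.kChain {k : E3 × E3 → ℂ}
    (h : AEStronglyMeasurable k volume) (n : ℕ) : AEStronglyMeasurable (kChain k n) volume := by
  induction n with
  | zero => exact h
  | succ n ih => exact h.kComp (h.kConj.kComp ih)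

theorem MeasureTheory.AEStronglyMeasurable.kPow {k : E3 × E3 → ℂ}
    (h : AEStronglyMeasurable k volume) (n : ℕ) : AEStronglyMeasurable (kPow k n) volume := by
  induction n with
  | zero => exact h.kComp h.kConj
  | succ n ih => exact (h.kComp h.kConj).kComp ih

theorem eLpNorm_kChain_le {k : E3 × E3 → ℂ} (h : AEStronglyMeasurable k volume) (n : ℕ) :
    eLpNorm (kChain k n) 2 volume ≤ eLpNorm k 2 volume ^ (2 * n + 1) := by
  induction n with
  | zero => simp [kChain]
  | succ n ih =>
    calc eLpNorm (kChain k (n + 1)) 2 volume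
        ≤ eLpNorm k 2 volume * (eLpNorm (kConj k) 2 volume * eLpNorm (kChain k n) 2 volume) :=
          (eLpNorm_kComp_le h (h.kConj.kComp (h.kChain n))).trans
            (mul_le_mul_right (eLpNorm_kComp_le h.kConj (h.kChain n)) _)
      _ ≤ eLpNorm k 2 volume * (eLpNorm k 2 volume * eLpNorm k 2 volume ^ (2 * n + 1)) := by
          rw [eLpNorm_kConj]; gcongr
      _ = eLpNorm k 2 volume ^ (2 * (n + 1) + 1) := by ring

theorem eLpNorm_kPow_le {k : E3 × E3 → ℂ} (h : AEStronglyMeasurable k volume) (n : ℕ) :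
    eLpNorm (kPow k n) 2 volume ≤ eLpNorm k 2 volume ^ (2 * (n + 1)) := by
  have hsq : eLpNorm (kComp k (kConj k)) 2 volume ≤ eLpNorm k 2 volume ^ 2 :=
    (eLpNorm_kComp_le h h.kConj).trans_eq (by rw [eLpNorm_kConj, sq])
  induction n with
  | zero => exact hsq
  | succ n ih =>
    calc eLpNorm (kPow k (n + 1)) 2 volume
        ≤ eLpNorm k 2 volume ^ 2 * eLpNorm k 2 volume ^ (2 * (n + 1)) :=
          (eLpNorm_kComp_le (h.kComp h.kConj) (h.kPow n)).trans (by gcongr)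
      _ = eLpNorm k 2 volume ^ (2 * (n + 1 + 1)) := by ring

theorem Real.hasSum_cosh_sub_one (x : ℝ) :
    HasSum (fun n : ℕ => ((Nat.factorial (2 * (n + 1)) : ℝ))⁻¹ * x ^ (2 * (n + 1)))
      (Real.cosh x - 1) := by
  simpa [div_eq_inv_mul] using (hasSum_nat_add_iff' 1).mpr (Real.hasSum_cosh x)

theorem Real.hasSum_sinh_sub_self (x : ℝ) :
    HasSum (fun n : ℕ => ((Nat.factorial (2 * (n + 1) + 1) : ℝ))⁻¹ * x ^ (2 * (n + 1) + 1))
      (Real.sinh x - x) := by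
  simpa [div_eq_inv_mul] using (hasSum_nat_add_iff' 1).mpr (Real.hasSum_sinh x)

theorem l2n_nonneg (f : E3 × E3 → ℂ) : 0 ≤ l2n f := Real.sqrt_nonneg _

theorem l2n_eq_lpNorm {f : E3 × E3 → ℂ} (hf : AEStronglyMeasurable f volume) :
    l2n f = lpNorm f 2 volume := by
  rw [l2n, Real.sqrt_eq_rpow]
  simpa using (lpNorm_nnreal_eq_integral_norm_rpow (μ := volume) (p := 2) two_ne_zero hf).symm

theorem summable_and_l2n_tsum_le {f : ℕ → E3 × E3 → ℂ} {w b : ℕ → ℝ} {C : ℝ}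
    (hf : ∀ n, AEStronglyMeasurable (f n) volume) (hw : ∀ n, 0 ≤ w n) (hb : ∀ n, 0 ≤ b n)
    (hfb : ∀ n, eLpNorm (f n) 2 volume ≤ ENNReal.ofReal (b n))
    (hC : HasSum (fun n => w n * b n) C) :
    Summable (fun n => w n * l2n (f n)) ∧
      l2n (fun p => ∑' n, (w n : ℂ) * f n p) ≤ C := by
  have hwf (n : ℕ) : AEStronglyMeasurable (fun p => (w n : ℂ) * f n p) volume :=
    (hf n).const_mul _
  have hwfb (n : ℕ) :
      eLpNorm (fun p => (w n : ℂ) * f n p) 2 volume ≤ ENNReal.ofReal (w n * b n) := by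
    calc eLpNorm (fun p => (w n : ℂ) * f n p) 2 volume
        = ‖(w n : ℂ)‖ₑ * eLpNorm (f n) 2 volume := eLpNorm_const_smul (w n : ℂ) (f n) 2 volume
      _ ≤ ENNReal.ofReal (w n) * ENNReal.ofReal (b n) := by
          rw [← ofReal_norm, Complex.norm_real, Real.norm_of_nonneg (hw n)]
          gcongr
          exact hfb n
      _ = ENNReal.ofReal (w n * b n) := (ENNReal.ofReal_mul (hw n)).symm
  have hsum_meas : AEStronglyMeasurable (fun p => ∑' n, (w n : ℂ) * f n p) volume :=
    aestronglyMeasurable_tsum_of_tsum_eLpNorm_ne_top one_le_two hwf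
      (ne_top_of_le_ne_top (ENNReal.ofReal_ne_top (r := C)) (by
        rw [← hC.tsum_eq,
          ENNReal.ofReal_tsum_of_nonneg (fun n => mul_nonneg (hw n) (hb n)) hC.summable]
        exact ENNReal.tsum_le_tsum hwfb))
  refine ⟨hC.summable.of_nonneg_of_le (fun n => mul_nonneg (hw n) (l2n_nonneg _)) fun n => ?_, ?_⟩
  · rw [l2n_eq_lpNorm (hf n), ← toReal_eLpNorm (hf n)]
    exact mul_le_mul_of_nonneg_left (ENNReal.toReal_le_of_le_ofReal (hb n) (hfb n)) (hw n)
  · rw [l2n_eq_lpNorm hsum_meas]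
    exact lpNorm_tsum_le one_le_two hwf (fun n => mul_nonneg (hw n) (hb n)) hwfb hC

/-- For `k ∈ L²(ℝ³×ℝ³)`, the series `p = Σ_{n≥1} (1/(2n)!)(k∘k̄)ⁿ` and
`r = Σ_{n≥1} (1/(2n+1)!)(k∘k̄)ⁿ∘k` converge absolutely in `L²(ℝ³×ℝ³)`, and their sums
satisfy `‖p‖₂ ≤ cosh(‖k‖₂) − 1` and `‖r‖₂ ≤ sinh(‖k‖₂) − ‖k‖₂`. -/
theorem stmt9 (k : E3 × E3 → ℂ) (hk : MemLp k 2 (volume : Measure (E3 × E3))) :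
    (∀ n : ℕ, MemLp (kPow k n) 2 (volume : Measure (E3 × E3))) ∧
    (∀ n : ℕ, MemLp (kChain k (n + 1)) 2 (volume : Measure (E3 × E3))) ∧
    Summable (fun n : ℕ => ((Nat.factorial (2 * (n + 1)) : ℝ))⁻¹ * l2n (kPow k n)) ∧
    Summable (fun n : ℕ =>
      ((Nat.factorial (2 * (n + 1) + 1) : ℝ))⁻¹ * l2n (kChain k (n + 1))) ∧
    l2n (fun p => ∑' n : ℕ, ((Nat.factorial (2 * (n + 1)) : ℂ))⁻¹ * kPow k n p) ≤
      Real.cosh (l2n k) - 1 ∧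
    l2n (fun p => ∑' n : ℕ, ((Nat.factorial (2 * (n + 1) + 1) : ℂ))⁻¹ * kChain k (n + 1) p) ≤
      Real.sinh (l2n k) - l2n k := by
  have hnorm : eLpNorm k 2 volume = ENNReal.ofReal (l2n k) := by
    rw [l2n_eq_lpNorm hk.1, ofReal_lpNorm hk]
  have hpow (n : ℕ) : eLpNorm (kPow k n) 2 volume ≤ ENNReal.ofReal (l2n k ^ (2 * (n + 1))) := by
    rw [ENNReal.ofReal_pow (l2n_nonneg k), ← hnorm]
    exact eLpNorm_kPow_le hk.1 n
  have hchain (n : ℕ) :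
      eLpNorm (kChain k (n + 1)) 2 volume ≤ ENNReal.ofReal (l2n k ^ (2 * (n + 1) + 1)) := by
    rw [ENNReal.ofReal_pow (l2n_nonneg k), ← hnorm]
    exact eLpNorm_kChain_le hk.1 (n + 1)
  obtain ⟨hpow_summable, hpow_le⟩ := summable_and_l2n_tsum_le hk.1.kPow
    (fun n => by positivity) (fun n => pow_nonneg (l2n_nonneg k) _) hpow
    (Real.hasSum_cosh_sub_one (l2n k))
  obtain ⟨hchain_summable, hchain_le⟩ := summable_and_l2n_tsum_le (fun n => hk.1.kChain (n + 1))
    (fun n => by positivity) (fun n => pow_nonneg (l2n_nonneg k) _) hchain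
    (Real.hasSum_sinh_sub_self (l2n k))
  push_cast at hpow_le hchain_le
  exact ⟨fun n => ⟨hk.1.kPow n, (hpow n).trans_lt ENNReal.ofReal_lt_top⟩,
    fun n => ⟨hk.1.kChain (n + 1), (hchain n).trans_lt ENNReal.ofReal_lt_top⟩,
    hpow_summable, hchain_summable, hpow_le, hchain_le⟩
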